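/- arXiv:2603.21492 — 2 statements merged into one kernel-verified Lean document; each statement's English description precedes it below -/
import Mathlib

section
/- If the set function f : 2^V → ℝ≥0 is monotone, then every first-order partial derivative of its Multinoulli Extension is nonnegative: ∂F/∂p_k^m (p_1,…,p_K) ≥ 0 for all (p_1,…,p_K) ∈ ∏_{k=1}^K Δ_{n_k}, all k ∈ {1,…,K} and all m ∈ {1,…,n_k}. -/
/-! `F` is a sum over joint outcomes `e` of `f(S(e))` times a product of one affine factor per
trial, so by the product rule `∂F/∂x_{k,m}` is a sum over the trials `s` of community `k`.
Fixing the outcomes of all other trials, `x_{k,m}` enters the factor of `s` with slope `1` on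
the outcome `v_k^m`, `-1` on `∅` and `0` otherwise; the contribution is therefore the
probability of the other outcomes times `f(S ∪ {v_k^m}) - f(S)`, which is nonnegative by
monotonicity. -/

open Finset

noncomputable section

namespace Multinoulli

variable {K : ℕ}

/-- An element of the ground set `V`: a community index `k` together with the
index `m` of the element `v_k^m` inside its community `V_k`. -/
abbrev Elem (n : Fin K → ℕ) := Σ k : Fin K, Fin (n k)

/-- A sampling slot: a community `k` together with a trial index `b ∈ {1,…,B_k}`. -/
abbrev Slot (B : Fin K → ℕ) := Σ k : Fin K, Fin (B k)

/-- A joint outcome of all the independent multinoulli trials; `none` encodes a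
draw of `∅`, which contributes no element. -/
abbrev Choice (n B : Fin K → ℕ) := ∀ s : Slot B, Option (Fin (n s.1))

/-- The probability that `Multi(p_k)` (the `k`-th block of `x`) assigns to a given
outcome: `x ⟨k,m⟩` for the element `v_k^m` and `1 - Σ_m x ⟨k,m⟩` for `∅`. -/
def prob (n : Fin K → ℕ) (x : Elem n → ℝ) (k : Fin K) : Option (Fin (n k)) → ℝ
  | some m => x ⟨k, m⟩
  | none => 1 - ∑ m : Fin (n k), x ⟨k, m⟩

/-- The probability of the joint outcome `e` (all trials are mutually independent). -/
def jointProb (n B : Fin K → ℕ) (x : Elem n → ℝ) (e : Choice n B) : ℝ :=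
  ∏ s : Slot B, prob n x s.1 (e s)

/-- The subset of the ground set selected by the trials whose slot lies in `A`
(a draw of `∅` contributes no element to the union). -/
def chosen (n B : Fin K → ℕ) (e : Choice n B) (A : Finset (Slot B)) : Finset (Elem n) :=
  A.biUnion fun s => ((e s).map fun m => (⟨s.1, m⟩ : Elem n)).toFinset

/-- The Multinoulli Extension `F` of the set function `f`:
`F(x) = E[f(∪_{k,b} {e_k^b})]` for mutually independent `e_k^b ∼ Multi(p_k)`. -/
def ME (n B : Fin K → ℕ) (f : Finset (Elem n) → ℝ) (x : Elem n → ℝ) : ℝ :=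
  ∑ e : Choice n B, f (chosen n B e Finset.univ) * jointProb n B x e

/-- The first-order partial derivative `∂G/∂x_i` at `x`. -/
def pderiv (n : Fin K → ℕ) (G : (Elem n → ℝ) → ℝ) (i : Elem n) (x : Elem n → ℝ) : ℝ :=
  deriv (fun t => G (Function.update x i t)) (x i)

/-- The gradient `∇G(x)`. -/
def grad (n : Fin K → ℕ) (G : (Elem n → ℝ) → ℝ) (x : Elem n → ℝ) : Elem n → ℝ :=
  fun i => pderiv n G i x

/-- The second-order partial derivative `∂²G/∂x_i∂x_j` at `x`. -/
def pderiv2 (n : Fin K → ℕ) (G : (Elem n → ℝ) → ℝ) (i j : Elem n) (x : Elem n → ℝ) : ℝ :=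
  pderiv n (fun y => pderiv n G j y) i x

/-- The Euclidean inner product on `∏_k ℝ^{n_k}`. -/
def inner' (n : Fin K → ℕ) (u v : Elem n → ℝ) : ℝ := ∑ i : Elem n, u i * v i

/-- Membership in the product of simplices `∏_{k=1}^K Δ_{n_k}`. -/
def InSimplex (n : Fin K → ℕ) (x : Elem n → ℝ) : Prop :=
  (∀ i, 0 ≤ x i) ∧ ∀ k : Fin K, ∑ m : Fin (n k), x ⟨k, m⟩ ≤ 1

/-- Feasibility for the partition constraint: `|S ∩ V_k| ≤ B_k` for all `k`. -/
def Feasible (n B : Fin K → ℕ) (S : Finset (Elem n)) : Prop :=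
  ∀ k : Fin K, (S.filter fun i => i.1 = k).card ≤ B k

/-- Monotonicity of a set function. -/
def MonotoneSet (n : Fin K → ℕ) (f : Finset (Elem n) → ℝ) : Prop :=
  ∀ A B : Finset (Elem n), A ⊆ B → f A ≤ f B

/-- The marginal contribution `f(v|A) = f(A ∪ {v}) - f(A)`. -/
def marg (n : Fin K → ℕ) (f : Finset (Elem n) → ℝ) (v : Elem n) (A : Finset (Elem n)) : ℝ :=
  f (insert v A) - f A

/-- `α`-weak DR-submodularity: `f(v|A) ≥ α·f(v|B)` for all `A ⊆ B` and `v ∉ B`. -/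
def WeaklyDR (n : Fin K → ℕ) (f : Finset (Elem n) → ℝ) (α : ℝ) : Prop :=
  ∀ A B : Finset (Elem n), A ⊆ B → ∀ v, v ∉ B → α * marg n f v B ≤ marg n f v A

/-- `γ`-weak submodularity from below. -/
def WeaklyBelow (n : Fin K → ℕ) (f : Finset (Elem n) → ℝ) (γ : ℝ) : Prop :=
  ∀ A B : Finset (Elem n), A ⊆ B → γ * (f B - f A) ≤ ∑ v ∈ B \ A, marg n f v A

/-- `β`-weak submodularity from above. -/
def WeaklyAbove (n : Fin K → ℕ) (f : Finset (Elem n) → ℝ) (β : ℝ) : Prop :=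
  ∀ A B : Finset (Elem n), A ⊆ B → ∑ v ∈ B \ A, marg n f v (B.erase v) ≤ β * (f B - f A)

/-- The scaled indicator vector `Σ_{k=1}^K (1/B_k)·1_{S∩V_k}`. -/
def indVec (n B : Fin K → ℕ) (S : Finset (Elem n)) : Elem n → ℝ :=
  fun i => if i ∈ S then ((B i.1 : ℝ))⁻¹ else 0

/-- `∂/∂x_i` of `prob n x k o`, which does not depend on `x` since `prob` is affine in `x`. -/
def probSlope (n : Fin K → ℕ) (i : Elem n) (k : Fin K) : Option (Fin (n k)) → ℝ
  | some m => (Pi.single i 1 : Elem n → ℝ) ⟨k, m⟩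
  | none => -∑ m : Fin (n k), (Pi.single i 1 : Elem n → ℝ) ⟨k, m⟩

def outProb (n B : Fin K → ℕ) (x : Elem n → ℝ) (e : Choice n B) (s : Slot B) : ℝ :=
  ∏ s' ∈ univ.erase s, prob n x s'.1 (e s')

section Derivatives

variable (n B : Fin K → ℕ) (x : Elem n → ℝ) (i : Elem n)

theorem hasDerivAt_prob_update (k : Fin K) (o : Option (Fin (n k))) :
    HasDerivAt (fun t => prob n (Function.update x i t) k o) (probSlope n i k o) (x i) := by
  have hcoord (j : Elem n) :
      HasDerivAt (fun t => Function.update x i t j) ((Pi.single i 1 : Elem n → ℝ) j) (x i) :=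
    hasDerivAt_pi.1 (hasDerivAt_update x i (x i)) j
  cases o with
  | some m => exact hcoord ⟨k, m⟩
  | none => exact (HasDerivAt.fun_sum fun m _ => hcoord ⟨k, m⟩).const_sub 1

theorem hasDerivAt_jointProb_update (e : Choice n B) :
    HasDerivAt (fun t => jointProb n B (Function.update x i t) e)
      (∑ s : Slot B, outProb n B x e s * probSlope n i s.1 (e s)) (x i) := by
  have h := HasDerivAt.fun_finsetProd (u := univ) fun s _ => hasDerivAt_prob_update n x i s.1 (e s)
  simp only [smul_eq_mul, Function.update_eq_self] at h
  exact h

theorem hasDerivAt_ME_update (f : Finset (Elem n) → ℝ) :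
    HasDerivAt (fun t => ME n B f (Function.update x i t))
      (∑ s : Slot B, ∑ e : Choice n B,
        f (chosen n B e univ) * outProb n B x e s * probSlope n i s.1 (e s)) (x i) := by
  have h := HasDerivAt.fun_sum (u := univ) fun e _ =>
    (hasDerivAt_jointProb_update n B x i e).const_mul (f (chosen n B e univ))
  simp only [mul_sum, ← mul_assoc] at h
  rwa [sum_comm] at h

end Derivatives

theorem probSlope_of_ne (n : Fin K → ℕ) (i : Elem n) {k : Fin K} (hk : k ≠ i.1)
    (o : Option (Fin (n k))) : probSlope n i k o = 0 := by
  have hsingle (m : Fin (n k)) : (Pi.single i 1 : Elem n → ℝ) ⟨k, m⟩ = 0 :=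
    Pi.single_eq_of_ne (fun h => hk (congrArg Sigma.fst h)) 1
  cases o <;> simp [probSlope, hsingle]

theorem sum_option_mul_probSlope (n : Fin K → ℕ) (k : Fin K) (m : Fin (n k))
    (g : Option (Fin (n k)) → ℝ) :
    ∑ o, g o * probSlope n ⟨k, m⟩ k o = g (some m) - g none := by
  simp [Fintype.sum_option, probSlope, Pi.single_apply, sub_eq_add_neg, add_comm]

theorem prob_nonneg {n : Fin K → ℕ} {x : Elem n → ℝ} (hx : InSimplex n x)
    (k : Fin K) (o : Option (Fin (n k))) : 0 ≤ prob n x k o := by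
  cases o with
  | some m => exact hx.1 _
  | none => exact sub_nonneg.2 (hx.2 k)

theorem outProb_nonneg {n : Fin K → ℕ} (B : Fin K → ℕ) {x : Elem n → ℝ} (hx : InSimplex n x)
    (e : Choice n B) (s : Slot B) : 0 ≤ outProb n B x e s :=
  prod_nonneg fun _ _ => prob_nonneg hx _ _

theorem outProb_congr (n B : Fin K → ℕ) (x : Elem n → ℝ) {e₁ e₂ : Choice n B} {s : Slot B}
    (h : ∀ s', s' ≠ s → e₁ s' = e₂ s') : outProb n B x e₁ s = outProb n B x e₂ s :=
  prod_congr rfl fun s' hs' => by rw [h s' (ne_of_mem_erase hs')]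

theorem chosen_mono (n B : Fin K → ℕ) {e₁ e₂ : Choice n B} (A : Finset (Slot B))
    (h : ∀ s, e₁ s = e₂ s ∨ e₁ s = none) : chosen n B e₁ A ⊆ chosen n B e₂ A := by
  intro v hv
  simp only [chosen, mem_biUnion] at hv ⊢
  obtain ⟨s, hs, hv⟩ := hv
  rcases h s with h' | h'
  · exact ⟨s, hs, h' ▸ hv⟩
  · simp [h'] at hv

theorem sum_mul_outProb_mul_probSlope_nonneg {n B : Fin K → ℕ} {f : Finset (Elem n) → ℝ}
    (hmono : MonotoneSet n f) {x : Elem n → ℝ} (hx : InSimplex n x) (s : Slot B) (i : Elem n) :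
    0 ≤ ∑ e : Choice n B, f (chosen n B e univ) * outProb n B x e s * probSlope n i s.1 (e s) := by
  obtain ⟨k, b⟩ := s
  obtain ⟨k', m⟩ := i
  by_cases hk : k = k'
  swap
  · exact (sum_eq_zero fun e _ => by rw [probSlope_of_ne n _ hk, mul_zero]).ge
  subst hk
  set E := Equiv.piSplitAt (⟨k, b⟩ : Slot B) fun s => Option (Fin (n s.1))
  have hE_at (a : Option (Fin (n k))) r : E.symm (a, r) ⟨k, b⟩ = a := by simp [E]
  have hE_off (a a' : Option (Fin (n k))) r s (hs : s ≠ ⟨k, b⟩) :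
      E.symm (a, r) s = E.symm (a', r) s := by simp [E, hs]
  rw [← E.symm.sum_comp, Fintype.sum_prod_type, sum_comm]
  refine sum_nonneg fun r _ => ?_
  simp only [hE_at, sum_option_mul_probSlope]
  have hsub : chosen n B (E.symm (none, r)) univ ⊆ chosen n B (E.symm (some m, r)) univ := by
    refine chosen_mono n B univ fun s => ?_
    by_cases hs : s = ⟨k, b⟩
    · subst hs
      exact Or.inr (hE_at none r)
    · exact Or.inl (hE_off none (some m) r s hs)
  rw [outProb_congr n B x (hE_off (some m) none r), ← sub_mul]
  exact mul_nonneg (sub_nonneg.2 (hmono _ _ hsub)) (outProb_nonneg B hx _ _)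

theorem multinoulliExtension_pderiv_nonneg_general {K : ℕ} (n B : Fin K → ℕ)
    (f : Finset (Elem n) → ℝ)
    (hmono : MonotoneSet n f)
    (x : Elem n → ℝ) (hx : InSimplex n x) (k : Fin K) (m : Fin (n k)) :
    0 ≤ pderiv n (ME n B f) ⟨k, m⟩ x := by
  rw [pderiv, (hasDerivAt_ME_update n B x ⟨k, m⟩ f).deriv]
  exact sum_nonneg fun s _ => sum_mul_outProb_mul_probSlope_nonneg hmono hx s ⟨k, m⟩

theorem multinoulliExtension_pderiv_nonneg {K : ℕ} (n B : Fin K → ℕ) (hn : ∀ k, 1 ≤ n k)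
    (hB : ∀ k, 0 < B k) (hBn : ∀ k, B k ≤ n k)
    (f : Finset (Elem n) → ℝ) (hf0 : ∀ S, 0 ≤ f S)
    (hmono : MonotoneSet n f)
    (x : Elem n → ℝ) (hx : InSimplex n x) (k : Fin K) (m : Fin (n k)) :
    0 ≤ pderiv n (ME n B f) ⟨k, m⟩ x :=
  multinoulliExtension_pderiv_nonneg_general n B f hmono x hx k m

end Multinoulli
end
end

section
/- If the set function f : 2^V → ℝ≥0 is monotone, (γ,β)-weakly submodular for some γ ∈ (0,1] and β ≥ 1, and satisfies f(∅) = 0, then, writing φ = β(1−γ) + γ², for every point x = (p_1,…,p_K) ∈ ∏_{k=1}^K Δ_{n_k} and every feasible subset S ⊆ V, one has ⟨ Σ_{k=1}^K (1/B_k)·1_{S∩V_k} − x, ∫_0^1 e^{φ(z−1)} ∇F(z·x) dz ⟩ ≥ (γ²(1 − e^{−φ})/φ)·f(S) − F(x). -/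
open Finset

noncomputable section

namespace Multinoulli

variable {K : ℕ}

/-- The (coordinatewise) auxiliary integral `∫_0^1 w(z)·∇F(z·x) dz`, where `z·x`
denotes coordinatewise scaling of `x` by `z`. -/
def auxGrad (n B : Fin K → ℕ) (f : Finset (Elem n) → ℝ) (w : ℝ → ℝ) (x : Elem n → ℝ) :
    Elem n → ℝ :=
  fun i => ∫ z in (0:ℝ)..1, w z * grad n (ME n B f) (fun j => z * x j) i


end Multinoulli

/-!
Differentiating the product of slot probabilities and resampling the differentiated slot gives
`∂F/∂x_i (y) = E_y[∑_b f(i | R₋₍ᵢ,b₎)]`, where `R` is the random set and `R₋ₛ` the set chosen by all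
slots but `s`. Fix an outcome. Slot `s` adds at most one element to `R₋ₛ`, so weak submodularity
from below gives `f(i | R₋ₛ) ≥ γ f(i | R) - (1 - γ) (f(R) - f(R₋ₛ))`; the elements added by single
slots are distinct, so weak submodularity from above bounds the total loss `∑ₛ (f(R) - f(R₋ₛ))` by
`β f(R)`; and `|S ∩ V_k| ≤ B_k` bounds the share of that loss charged to `S`. Averaging,
`⟨1_S/B, ∇F(z x)⟩ ≥ γ² f(S) - φ F(z x)` for `z ∈ [0,1]`. Since `d/dz F(z x) = ⟨x, ∇F(z x)⟩`, the
derivative of `e^{φ(z-1)} F(z x)` is `e^{φ(z-1)} (φ F(z x) + ⟨x, ∇F(z x)⟩)`; integrating against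
`e^{φ(z-1)}` over `[0,1]` and using `F(0) = f(∅) = 0` gives the claim.
-/

section Resampling

variable {ι : Type*} [Fintype ι] [DecidableEq ι] {α : ι → Type*} [∀ i, Fintype (α i)]

theorem Fintype.sum_sum_update_swap {M : Type*} [AddCommMonoid M] (i : ι)
    (Φ : (∀ j, α j) → α i → M) :
    ∑ e, ∑ a, Φ (Function.update e i a) (e i) = ∑ e, ∑ a, Φ e a := by
  let σ : (∀ j, α j) × α i → (∀ j, α j) × α i := fun p => (Function.update p.1 i p.2, p.1 i)
  have hσ : Function.Involutive σ := fun p => by simp [σ]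
  simp only [← Fintype.sum_prod_type']
  exact Equiv.sum_comp hσ.toPerm (fun p => Φ p.1 p.2)

theorem Fintype.sum_mul_prod_erase_mul_eq_sum_prod_mul_sum_update {R : Type*} [CommSemiring R]
    (p : ∀ j, α j → R) (i : ι) (hp : ∑ a, p i a = 1) (H : (∀ j, α j) → R) (c : α i → R) :
    ∑ e, H e * ((∏ j ∈ univ.erase i, p j (e j)) * c (e i))
      = ∑ e, (∏ j, p j (e j)) * ∑ a, c a * H (Function.update e i a) := by
  simp_rw [Finset.mul_sum]
  rw [← Fintype.sum_sum_update_swap i]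
  refine Fintype.sum_congr _ _ fun e => ?_
  simp_rw [Function.apply_update (fun j => p j), Finset.prod_update_of_mem (Finset.mem_univ i),
    Function.update_idem, Function.update_eq_self, Finset.sdiff_singleton_eq_erase]
  rw [← Finset.sum_mul, ← Finset.sum_mul, hp, one_mul]
  ring

end Resampling

theorem Finset.pairwiseDisjoint_biUnion_sdiff_biUnion_erase {ι α : Type*} [DecidableEq ι]
    [DecidableEq α] (t : Finset ι) (C : ι → Finset α) :
    (t : Set ι).PairwiseDisjoint fun s => t.biUnion C \ (t.erase s).biUnion C := by
  have hmem : ∀ s v, v ∈ t.biUnion C \ (t.erase s).biUnion C → v ∈ C s := by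
    intro s v hv
    obtain ⟨u, hu, hvu⟩ := Finset.mem_biUnion.1 (Finset.mem_sdiff.1 hv).1
    by_contra hvs
    have hus : u ≠ s := fun h => hvs (h ▸ hvu)
    exact (Finset.mem_sdiff.1 hv).2 (Finset.mem_biUnion.2 ⟨u, Finset.mem_erase.2 ⟨hus, hu⟩, hvu⟩)
  intro s hs s' _ hss'
  refine Finset.disjoint_left.2 fun v hv hv' => (Finset.mem_sdiff.1 hv').2 ?_
  exact Finset.mem_biUnion.2 ⟨s, Finset.mem_erase.2 ⟨hss', hs⟩, hmem s v hv⟩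

open Real in
theorem le_integral_exp_mul_sub {g P Q : ℝ → ℝ} {a φ : ℝ} (hφ : φ ≠ 0)
    (hg : ∀ z, HasDerivAt g (Q z) z) (hP : Continuous P) (hQ : Continuous Q)
    (hPg : ∀ z ∈ Set.Icc (0 : ℝ) 1, a - φ * g z ≤ P z) :
    a * (1 - exp (-φ)) / φ - (g 1 - exp (-φ) * g 0)
      ≤ ∫ z in (0 : ℝ)..1, exp (φ * (z - 1)) * (P z - Q z) := by
  set w : ℝ → ℝ := fun z => exp (φ * (z - 1))
  have hw : ∀ z, HasDerivAt w (φ * w z) z := fun z => by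
    simpa [w, mul_comm] using (((hasDerivAt_id z).sub_const 1).const_mul φ).exp
  have hwc : Continuous w := by fun_prop
  have hgc : Continuous g := continuous_iff_continuousAt.2 fun z => (hg z).continuousAt
  have hint_w : ∫ z in (0 : ℝ)..1, w z = (1 - exp (-φ)) / φ := by
    rw [intervalIntegral.integral_eq_sub_of_hasDerivAt (f := fun z => w z / φ)
      (fun z _ => by simpa [mul_div_cancel_left₀ _ hφ] using (hw z).div_const φ)
      (hwc.intervalIntegrable 0 1)]
    simp only [w, sub_self, mul_zero, exp_zero, zero_sub, mul_neg, mul_one]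
    ring
  have hint_wg : ∫ z in (0 : ℝ)..1, (φ * w z * g z + w z * Q z) = g 1 - exp (-φ) * g 0 := by
    rw [intervalIntegral.integral_eq_sub_of_hasDerivAt (f := fun z => w z * g z)
      (fun z _ => (hw z).mul (hg z))
      ((show Continuous fun z => φ * w z * g z + w z * Q z by fun_prop).intervalIntegrable 0 1)]
    simp [w]
  calc a * (1 - exp (-φ)) / φ - (g 1 - exp (-φ) * g 0)
      = ∫ z in (0 : ℝ)..1, (a * w z - (φ * w z * g z + w z * Q z)) := by
        rw [intervalIntegral.integral_sub ((hwc.const_mul a).intervalIntegrable 0 1)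
          ((by fun_prop : Continuous _).intervalIntegrable 0 1),
          intervalIntegral.integral_const_mul, hint_w, hint_wg]
        ring
    _ ≤ ∫ z in (0 : ℝ)..1, w z * (P z - Q z) := by
        refine intervalIntegral.integral_mono_on zero_le_one
          ((by fun_prop : Continuous _).intervalIntegrable 0 1)
          ((by fun_prop : Continuous _).intervalIntegrable 0 1) fun z hz => ?_
        have := mul_le_mul_of_nonneg_left (hPg z hz) (exp_pos (φ * (z - 1))).le
        linarith

namespace Multinoulli

section

variable {K : ℕ} {n B : Fin K → ℕ}

def probLin (n : Fin K → ℕ) (v : Elem n → ℝ) (k : Fin K) : Option (Fin (n k)) → ℝ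
  | some m => v ⟨k, m⟩
  | none => -∑ m : Fin (n k), v ⟨k, m⟩

lemma sum_prob (y : Elem n → ℝ) (k : Fin K) : ∑ o, prob n y k o = 1 := by
  simp [Fintype.sum_option, prob]

lemma prob_add_smul (y v : Elem n → ℝ) (t : ℝ) (k : Fin K) (o : Option (Fin (n k))) :
    prob n (y + t • v) k o = prob n y k o + t * probLin n v k o := by
  cases o with
  | some m => simp [prob, probLin]
  | none =>
    simp only [prob, probLin, Pi.add_apply, Pi.smul_apply, smul_eq_mul, Finset.sum_add_distrib,
      Finset.mul_sum, mul_neg]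
    ring

lemma hasDerivAt_prob_line (y v : Elem n → ℝ) (k : Fin K) (o : Option (Fin (n k))) (t : ℝ) :
    HasDerivAt (fun t => prob n (y + t • v) k o) (probLin n v k o) t := by
  simp_rw [prob_add_smul]
  simpa using (hasDerivAt_mul_const (probLin n v k o)).const_add (prob n y k o)

lemma hasDerivAt_jointProb_line (y v : Elem n → ℝ) (e : Choice n B) (t : ℝ) :
    HasDerivAt (fun t => jointProb n B (y + t • v) e)
      (∑ s, (∏ s' ∈ univ.erase s, prob n (y + t • v) s'.1 (e s')) * probLin n v s.1 (e s)) t := by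
  simpa [jointProb] using
    HasDerivAt.fun_finsetProd (u := univ) fun s _ => hasDerivAt_prob_line y v s.1 (e s) t

lemma chosen_update_univ (e : Choice n B) (s : Slot B) (o : Option (Fin (n s.1))) :
    chosen n B (Function.update e s o) univ
      = (o.map fun m => (⟨s.1, m⟩ : Elem n)).toFinset ∪ chosen n B e (univ.erase s) := by
  conv_lhs => rw [chosen, ← Finset.insert_erase (Finset.mem_univ s), Finset.biUnion_insert]
  rw [Function.update_self]
  congr 1
  exact Finset.biUnion_congr rfl fun s' hs' => by
    rw [Function.update_of_ne (Finset.ne_of_mem_erase hs')]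

def slotGain (n B : Fin K → ℕ) (f : Finset (Elem n) → ℝ) (i : Elem n) (e : Choice n B) : ℝ :=
  ∑ b : Fin (B i.1), marg n f i (chosen n B e (univ.erase ⟨i.1, b⟩))

lemma sum_probLin_mul_chosen_update (f : Finset (Elem n) → ℝ) (v : Elem n → ℝ)
    (e : Choice n B) (s : Slot B) :
    ∑ o, probLin n v s.1 o * f (chosen n B (Function.update e s o) univ)
      = ∑ m, v ⟨s.1, m⟩ * marg n f ⟨s.1, m⟩ (chosen n B e (univ.erase s)) := by
  simp only [Fintype.sum_option, chosen_update_univ, probLin, marg, Option.map_none,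
    Option.toFinset_none, Finset.empty_union, Option.map_some, Option.toFinset_some,
    ← Finset.insert_eq, mul_sub, Finset.sum_sub_distrib]
  rw [neg_mul, Finset.sum_mul]
  ring

lemma sum_slot_sum_elem_comm {M : Type*} [AddCommMonoid M] (g : ∀ k, Fin (B k) → Fin (n k) → M) :
    ∑ s : Slot B, ∑ m, g s.1 s.2 m = ∑ i : Elem n, ∑ b, g i.1 b i.2 := by
  simp only [Fintype.sum_sigma]
  exact Finset.sum_congr rfl fun k _ => Finset.sum_comm' (by simp)

theorem hasDerivAt_ME_line (f : Finset (Elem n) → ℝ) (y v : Elem n → ℝ) (t : ℝ) :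
    HasDerivAt (fun t => ME n B f (y + t • v))
      (∑ i, v i * ∑ e, slotGain n B f i e * jointProb n B (y + t • v) e) t := by
  have h := HasDerivAt.fun_sum (u := univ) fun e _ =>
    (hasDerivAt_jointProb_line (B := B) y v e t).const_mul (f (chosen n B e univ))
  refine h.congr_deriv ?_
  symm
  -- The product rule differentiates one slot at a time; resampling that slot turns each term
  -- into an expected marginal gain.
  set p := jointProb n B (y + t • v)
  calc ∑ i, v i * ∑ e, slotGain n B f i e * p e
      = ∑ e, p e * ∑ i : Elem n, ∑ b : Fin (B i.1),
          v i * marg n f i (chosen n B e (univ.erase ⟨i.1, b⟩)) := by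
        simp only [slotGain, Finset.mul_sum, Finset.sum_mul]
        conv_lhs => rw [Finset.sum_comm]
        exact Fintype.sum_congr _ _ fun e => Fintype.sum_congr _ _ fun i =>
          Fintype.sum_congr _ _ fun b => by ring
    _ = ∑ e, p e * ∑ s : Slot B, ∑ m,
          v ⟨s.1, m⟩ * marg n f ⟨s.1, m⟩ (chosen n B e (univ.erase s)) :=
        Fintype.sum_congr _ _ fun e => congrArg _ (sum_slot_sum_elem_comm fun k b m =>
          v ⟨k, m⟩ * marg n f ⟨k, m⟩ (chosen n B e (univ.erase ⟨k, b⟩))).symm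
    _ = ∑ s : Slot B, ∑ e, p e *
          ∑ o, probLin n v s.1 o * f (chosen n B (Function.update e s o) univ) := by
        simp only [sum_probLin_mul_chosen_update, Finset.mul_sum]
        exact Finset.sum_comm
    _ = ∑ s : Slot B, ∑ e, f (chosen n B e univ) *
          ((∏ s' ∈ univ.erase s, prob n (y + t • v) s'.1 (e s')) * probLin n v s.1 (e s)) :=
        Fintype.sum_congr _ _ fun s => (Fintype.sum_mul_prod_erase_mul_eq_sum_prod_mul_sum_update
          (fun s' => prob n (y + t • v) s'.1) s (sum_prob _ _) (fun e => f (chosen n B e univ))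
          (probLin n v s.1)).symm
    _ = ∑ e, f (chosen n B e univ) * ∑ s,
          (∏ s' ∈ univ.erase s, prob n (y + t • v) s'.1 (e s')) * probLin n v s.1 (e s) := by
        simp only [Finset.mul_sum]
        exact Finset.sum_comm

lemma update_eq_update_zero_add_smul (y : Elem n → ℝ) (i : Elem n) (t : ℝ) :
    Function.update y i t = Function.update y i 0 + t • Pi.single i 1 := by
  funext j
  by_cases h : j = i
  · subst h; simp
  · simp [h]

theorem pderiv_ME (f : Finset (Elem n) → ℝ) (i : Elem n) (y : Elem n → ℝ) :
    pderiv n (ME n B f) i y = ∑ e, slotGain n B f i e * jointProb n B y e := by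
  have h := hasDerivAt_ME_line (B := B) f (Function.update y i 0) (Pi.single i 1) (y i)
  simp only [← update_eq_update_zero_add_smul, Function.update_eq_self, Pi.single_apply,
    ite_mul, one_mul, zero_mul, Finset.sum_ite_eq', Finset.mem_univ, if_true] at h
  exact h.deriv

theorem hasDerivAt_ME_smul (f : Finset (Elem n) → ℝ) (x : Elem n → ℝ) (z : ℝ) :
    HasDerivAt (fun z : ℝ => ME n B f (z • x)) (inner' n x (grad n (ME n B f) (z • x))) z := by
  simpa [inner', grad, pderiv_ME] using hasDerivAt_ME_line (B := B) f 0 x z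

theorem continuous_pderiv_ME_smul (f : Finset (Elem n) → ℝ) (x : Elem n → ℝ) (i : Elem n) :
    Continuous fun z : ℝ => pderiv n (ME n B f) i (z • x) := by
  simp only [pderiv_ME]
  refine continuous_finsetSum _ fun e _ => continuous_const.mul ?_
  exact continuous_iff_continuousAt.2 fun z => by
    simpa using (hasDerivAt_jointProb_line (B := B) 0 x e z).continuousAt

theorem ME_zero (f : Finset (Elem n) → ℝ) : ME n B f 0 = f ∅ := by
  rw [ME, Finset.sum_eq_single (fun _ => none)]
  · have hR : chosen n B (fun _ => none) univ = ∅ := by ext; simp [chosen]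
    simp [jointProb, prob, hR]
  · intro e _ he
    obtain ⟨s, hs⟩ : ∃ s, e s ≠ none := by
      by_contra! h
      exact he (funext h)
    obtain ⟨m, hm⟩ := Option.ne_none_iff_exists'.mp hs
    rw [jointProb, Finset.prod_eq_zero (Finset.mem_univ s) (by simp [hm, prob]), mul_zero]
  · simp

lemma sum_jointProb (y : Elem n → ℝ) : ∑ e, jointProb n B y e = 1 := by
  simp only [jointProb, ← Fintype.prod_sum, sum_prob, Finset.prod_const_one]

lemma InSimplex.smul {x : Elem n → ℝ} (hx : InSimplex n x) {z : ℝ} (h0 : 0 ≤ z) (h1 : z ≤ 1) :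
    InSimplex n (z • x) := by
  refine ⟨fun i => mul_nonneg h0 (hx.1 i), fun k => ?_⟩
  simp only [Pi.smul_apply, smul_eq_mul, ← Finset.mul_sum]
  exact mul_le_one₀ h1 (Finset.sum_nonneg fun m _ => hx.1 _) (hx.2 k)

lemma InSimplex.jointProb_nonneg {y : Elem n → ℝ} (hy : InSimplex n y) (e : Choice n B) :
    0 ≤ jointProb n B y e :=
  Finset.prod_nonneg fun s _ => by
    cases e s with
    | some m => exact hy.1 _
    | none => exact sub_nonneg.2 (hy.2 s.1)

section SetFunction

variable {f : Finset (Elem n) → ℝ} {A R : Finset (Elem n)}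

lemma marg_nonneg (hmono : MonotoneSet n f) (i : Elem n) (A : Finset (Elem n)) :
    0 ≤ marg n f i A :=
  sub_nonneg.2 (hmono _ _ (Finset.subset_insert i A))

lemma eq_or_eq_insert_of_card_sdiff_le_one (hAR : A ⊆ R) (hcard : (R \ A).card ≤ 1) :
    R = A ∨ ∃ v ∉ A, R = insert v A := by
  obtain h | ⟨v, hv⟩ := (R \ A).eq_empty_or_nonempty
  · exact .inl (Finset.Subset.antisymm (Finset.sdiff_eq_empty_iff_subset.1 h) hAR)
  · have hRA : R \ A = {v} :=
      Finset.eq_singleton_iff_unique_mem.2 ⟨hv, fun u hu => Finset.card_le_one.1 hcard u hu v hv⟩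
    refine .inr ⟨v, (Finset.mem_sdiff.1 hv).2, ?_⟩
    rw [Finset.insert_eq, ← hRA, Finset.sdiff_union_of_subset hAR]

lemma sub_eq_sum_marg_of_card_sdiff_le_one (hAR : A ⊆ R) (hcard : (R \ A).card ≤ 1) :
    f R - f A = ∑ v ∈ R \ A, marg n f v A := by
  obtain rfl | ⟨v, hv, rfl⟩ := eq_or_eq_insert_of_card_sdiff_le_one hAR hcard
  · simp
  · rw [Finset.insert_sdiff_of_notMem _ hv, Finset.sdiff_self, insert_empty_eq,
      Finset.sum_singleton, marg]

lemma sub_eq_sum_marg_erase_of_card_sdiff_le_one (hAR : A ⊆ R) (hcard : (R \ A).card ≤ 1) :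
    f R - f A = ∑ v ∈ R \ A, marg n f v (R.erase v) := by
  obtain rfl | ⟨v, hv, rfl⟩ := eq_or_eq_insert_of_card_sdiff_le_one hAR hcard
  · simp
  · rw [Finset.insert_sdiff_of_notMem _ hv, Finset.sdiff_self, insert_empty_eq,
      Finset.sum_singleton, marg, Finset.erase_insert hv]

lemma le_marg_of_card_sdiff_le_one (hmono : MonotoneSet n f) {γ : ℝ} (hbelow : WeaklyBelow n f γ)
    (hAR : A ⊆ R) (hcard : (R \ A).card ≤ 1) (i : Elem n) :
    γ * marg n f i R - (1 - γ) * (f R - f A) ≤ marg n f i A := by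
  have hγ := hbelow A (insert i R) (hAR.trans (Finset.subset_insert i R))
  have hsum : ∑ v ∈ insert i R \ A, marg n f v A ≤ marg n f i A + ∑ v ∈ R \ A, marg n f v A :=
    calc ∑ v ∈ insert i R \ A, marg n f v A ≤ ∑ v ∈ insert i (R \ A), marg n f v A :=
          Finset.sum_le_sum_of_subset_of_nonneg
            (fun v => by simp only [Finset.mem_sdiff, Finset.mem_insert]; tauto)
            fun v _ _ => marg_nonneg hmono v A
      _ ≤ marg n f i A + ∑ v ∈ R \ A, marg n f v A := by
          by_cases hi : i ∈ R \ A
          · rw [Finset.insert_eq_of_mem hi]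
            linarith [marg_nonneg hmono i A]
          · rw [Finset.sum_insert hi]
  rw [← sub_eq_sum_marg_of_card_sdiff_le_one hAR hcard] at hsum
  simp only [marg] at hγ hsum ⊢
  linarith

lemma mul_sub_le_sum_marg (hmono : MonotoneSet n f) {γ : ℝ} (hγ : 0 ≤ γ)
    (hbelow : WeaklyBelow n f γ) (S R : Finset (Elem n)) :
    γ * (f S - f R) ≤ ∑ i ∈ S, marg n f i R :=
  calc γ * (f S - f R) ≤ γ * (f (S ∪ R) - f R) :=
        mul_le_mul_of_nonneg_left (by linarith [hmono S (S ∪ R) Finset.subset_union_left]) hγ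
    _ ≤ ∑ v ∈ S \ R, marg n f v R := by
        simpa [Finset.union_sdiff_right] using hbelow R (S ∪ R) Finset.subset_union_right
    _ ≤ ∑ i ∈ S, marg n f i R :=
        Finset.sum_le_sum_of_subset_of_nonneg Finset.sdiff_subset fun v _ _ => marg_nonneg hmono v R

end SetFunction

section Outcome

variable {f : Finset (Elem n) → ℝ}

lemma chosen_erase_subset (e : Choice n B) (s : Slot B) :
    chosen n B e (univ.erase s) ⊆ chosen n B e univ :=
  Finset.biUnion_subset_biUnion_of_subset_left _ (Finset.erase_subset s univ)

lemma card_chosen_sdiff_chosen_erase_le_one (e : Choice n B) (s : Slot B) :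
    (chosen n B e univ \ chosen n B e (univ.erase s)).card ≤ 1 := by
  have h := chosen_update_univ e s (e s)
  rw [Function.update_eq_self] at h
  calc (chosen n B e univ \ chosen n B e (univ.erase s)).card
      ≤ ((e s).map fun m => (⟨s.1, m⟩ : Elem n)).toFinset.card := by
        rw [h]
        exact Finset.card_le_card (by simp [Finset.union_sdiff_right])
    _ ≤ 1 := by cases e s <;> simp

theorem sum_sub_chosen_erase_le (hmono : MonotoneSet n f) {β : ℝ} (habove : WeaklyAbove n f β)
    (hfempty : f ∅ = 0) (e : Choice n B) :
    ∑ s, (f (chosen n B e univ) - f (chosen n B e (univ.erase s))) ≤ β * f (chosen n B e univ) := by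
  set R := chosen n B e univ
  calc ∑ s, (f R - f (chosen n B e (univ.erase s)))
      = ∑ s, ∑ v ∈ R \ chosen n B e (univ.erase s), marg n f v (R.erase v) :=
        Fintype.sum_congr _ _ fun s => sub_eq_sum_marg_erase_of_card_sdiff_le_one
          (chosen_erase_subset e s) (card_chosen_sdiff_chosen_erase_le_one e s)
    _ = ∑ v ∈ univ.biUnion fun s => R \ chosen n B e (univ.erase s), marg n f v (R.erase v) :=
        (Finset.sum_biUnion (Finset.pairwiseDisjoint_biUnion_sdiff_biUnion_erase _ _)).symm
    _ ≤ ∑ v ∈ R, marg n f v (R.erase v) :=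
        Finset.sum_le_sum_of_subset_of_nonneg
          (Finset.biUnion_subset.2 fun s _ => Finset.sdiff_subset)
          fun v _ _ => marg_nonneg hmono _ _
    _ ≤ β * f R := by
        simpa [hfempty] using habove ∅ R (Finset.empty_subset R)

lemma Feasible.pos_of_mem {S : Finset (Elem n)} (hS : Feasible n B S) {i : Elem n} (hi : i ∈ S) :
    0 < B i.1 :=
  (show 0 < (S.filter fun j => j.1 = i.1).card from
    Finset.card_pos.2 ⟨i, Finset.mem_filter.2 ⟨hi, rfl⟩⟩).trans_le (hS i.1)

lemma Feasible.sum_inv_mul_sum_le {S : Finset (Elem n)} (hS : Feasible n B S) {N : Slot B → ℝ}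
    (hN : ∀ s, 0 ≤ N s) :
    ∑ i ∈ S, (B i.1 : ℝ)⁻¹ * ∑ b, N ⟨i.1, b⟩ ≤ ∑ s, N s := by
  rw [← Finset.sum_fiberwise_of_maps_to (g := Sigma.fst) (t := univ) fun i _ => Finset.mem_univ _,
    Fintype.sum_sigma]
  refine Finset.sum_le_sum fun k _ => ?_
  have hk : ∀ i ∈ S.filter fun i => i.1 = k,
      (B i.1 : ℝ)⁻¹ * ∑ b, N ⟨i.1, b⟩ = (B k : ℝ)⁻¹ * ∑ b, N ⟨k, b⟩ := by
    rintro ⟨k', m⟩ hi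
    obtain rfl := (Finset.mem_filter.1 hi).2
    rfl
  rw [Finset.sum_congr rfl hk, Finset.sum_const, nsmul_eq_mul, ← mul_assoc, ← div_eq_mul_inv]
  -- `#(S ∩ V_k) / B_k ≤ 1` holds also when `B_k = 0`, as then `S ∩ V_k = ∅` and `x / 0 = 0`.
  exact mul_le_of_le_one_left (Finset.sum_nonneg fun b _ => hN _)
    (div_le_one_of_le₀ (by exact_mod_cast hS k) (Nat.cast_nonneg _))

lemma sum_indVec_mul (S : Finset (Elem n)) (g : Elem n → ℝ) :
    ∑ i, indVec n B S i * g i = ∑ i ∈ S, (B i.1 : ℝ)⁻¹ * g i := by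
  simp [indVec, ite_mul, Finset.sum_ite_mem]

theorem le_sum_indVec_mul_slotGain (hmono : MonotoneSet n f) {γ β : ℝ} (hγ0 : 0 ≤ γ) (hγ1 : γ ≤ 1)
    (hbelow : WeaklyBelow n f γ) (habove : WeaklyAbove n f β) (hfempty : f ∅ = 0)
    {S : Finset (Elem n)} (hS : Feasible n B S) (e : Choice n B) :
    γ ^ 2 * f S - (β * (1 - γ) + γ ^ 2) * f (chosen n B e univ)
      ≤ ∑ i, indVec n B S i * slotGain n B f i e := by
  set R := chosen n B e univ
  set N : Slot B → ℝ := fun s => f R - f (chosen n B e (univ.erase s))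
  have hN : ∀ s, 0 ≤ N s := fun s => sub_nonneg.2 (hmono _ _ (chosen_erase_subset e s))
  have hgain : ∀ i ∈ S, γ * marg n f i R - (1 - γ) * ((B i.1 : ℝ)⁻¹ * ∑ b, N ⟨i.1, b⟩)
      ≤ (B i.1 : ℝ)⁻¹ * slotGain n B f i e := by
    intro i hi
    have hB : (B i.1 : ℝ) ≠ 0 := by exact_mod_cast (hS.pos_of_mem hi).ne'
    have h := Finset.sum_le_sum (s := univ) fun b _ => le_marg_of_card_sdiff_le_one hmono hbelow
      (chosen_erase_subset e ⟨i.1, b⟩) (card_chosen_sdiff_chosen_erase_le_one e ⟨i.1, b⟩) i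
    rw [Finset.sum_sub_distrib, Finset.sum_const, Finset.card_univ, Fintype.card_fin, nsmul_eq_mul,
      ← Finset.mul_sum] at h
    calc γ * marg n f i R - (1 - γ) * ((B i.1 : ℝ)⁻¹ * ∑ b, N ⟨i.1, b⟩)
        = (B i.1 : ℝ)⁻¹ * (B i.1 * (γ * marg n f i R) - (1 - γ) * ∑ b, N ⟨i.1, b⟩) := by
          field_simp
      _ ≤ (B i.1 : ℝ)⁻¹ * slotGain n B f i e := by gcongr; exact h
  calc γ ^ 2 * f S - (β * (1 - γ) + γ ^ 2) * f R
      = γ * (γ * (f S - f R)) - (1 - γ) * (β * f R) := by ring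
    _ ≤ γ * ∑ i ∈ S, marg n f i R - (1 - γ) * ∑ s, N s := by
        gcongr
        · exact mul_sub_le_sum_marg hmono hγ0 hbelow S R
        · exact sum_sub_chosen_erase_le hmono habove hfempty e
    _ ≤ γ * ∑ i ∈ S, marg n f i R - (1 - γ) * ∑ i ∈ S, (B i.1 : ℝ)⁻¹ * ∑ b, N ⟨i.1, b⟩ := by
        gcongr
        exact hS.sum_inv_mul_sum_le hN
    _ = ∑ i ∈ S, (γ * marg n f i R - (1 - γ) * ((B i.1 : ℝ)⁻¹ * ∑ b, N ⟨i.1, b⟩)) := by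
        rw [Finset.sum_sub_distrib, Finset.mul_sum, Finset.mul_sum]
    _ ≤ ∑ i ∈ S, (B i.1 : ℝ)⁻¹ * slotGain n B f i e := Finset.sum_le_sum hgain
    _ = ∑ i, indVec n B S i * slotGain n B f i e := (sum_indVec_mul S _).symm

end Outcome

theorem sub_le_inner'_indVec_grad_ME {f : Finset (Elem n) → ℝ} (hmono : MonotoneSet n f)
    {γ β : ℝ} (hγ0 : 0 ≤ γ) (hγ1 : γ ≤ 1) (hbelow : WeaklyBelow n f γ)
    (habove : WeaklyAbove n f β) (hfempty : f ∅ = 0) {S : Finset (Elem n)} (hS : Feasible n B S)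
    {y : Elem n → ℝ} (hy : InSimplex n y) :
    γ ^ 2 * f S - (β * (1 - γ) + γ ^ 2) * ME n B f y
      ≤ inner' n (indVec n B S) (grad n (ME n B f) y) := by
  have hME : γ ^ 2 * f S - (β * (1 - γ) + γ ^ 2) * ME n B f y
      = ∑ e, (γ ^ 2 * f S - (β * (1 - γ) + γ ^ 2) * f (chosen n B e univ)) * jointProb n B y e := by
    simp only [sub_mul, Finset.sum_sub_distrib, ← Finset.mul_sum, mul_assoc, sum_jointProb, ME]
    ring
  have hgrad : inner' n (indVec n B S) (grad n (ME n B f) y)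
      = ∑ e, (∑ i, indVec n B S i * slotGain n B f i e) * jointProb n B y e := by
    simp only [inner', grad, pderiv_ME, Finset.mul_sum, Finset.sum_mul, mul_assoc]
    exact Finset.sum_comm
  rw [hME, hgrad]
  exact Finset.sum_le_sum fun e _ => mul_le_mul_of_nonneg_right
    (le_sum_indVec_mul_slotGain hmono hγ0 hγ1 hbelow habove hfempty hS e) (hy.jointProb_nonneg e)

lemma continuous_inner'_grad_ME_smul (f : Finset (Elem n) → ℝ) (u x : Elem n → ℝ) :
    Continuous fun z : ℝ => inner' n u (grad n (ME n B f) (z • x)) :=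
  continuous_finsetSum _ fun i _ => continuous_const.mul (continuous_pderiv_ME_smul f x i)

lemma inner'_sub_left (u v w : Elem n → ℝ) :
    inner' n (fun i => u i - v i) w = inner' n u w - inner' n v w := by
  simp only [inner', sub_mul, Finset.sum_sub_distrib]

lemma inner'_auxGrad (f : Finset (Elem n) → ℝ) {w : ℝ → ℝ} (hw : Continuous w) (u x : Elem n → ℝ) :
    inner' n u (auxGrad n B f w x)
      = ∫ z in (0 : ℝ)..1, w z * inner' n u (grad n (ME n B f) (z • x)) := by
  simp only [inner', auxGrad, grad, Finset.mul_sum, Pi.smul_def, smul_eq_mul]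
  rw [intervalIntegral.integral_finsetSum
    (f := fun i z => w z * (u i * pderiv n (ME n B f) i fun j => z * x j)) fun i _ =>
    (hw.mul (continuous_const.mul (continuous_pderiv_ME_smul f x i))).intervalIntegrable 0 1]
  refine Fintype.sum_congr _ _ fun i => ?_
  rw [← intervalIntegral.integral_const_mul]
  exact intervalIntegral.integral_congr fun z _ => by ring

end

theorem multinoulliExtension_aux_weaklySub_general {K : ℕ} (n B : Fin K → ℕ)
    (f : Finset (Elem n) → ℝ)
    (hmono : MonotoneSet n f)
    (γ β : ℝ) (hγ0 : 0 < γ) (hγ1 : γ ≤ 1) (hβ : 1 ≤ β)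
    (hbelow : WeaklyBelow n f γ) (habove : WeaklyAbove n f β)
    (hfempty : f ∅ = 0)
    (x : Elem n → ℝ) (hx : InSimplex n x)
    (S : Finset (Elem n)) (hS : Feasible n B S) :
    γ ^ 2 * (1 - Real.exp (-(β * (1 - γ) + γ ^ 2))) / (β * (1 - γ) + γ ^ 2) * f S
        - ME n B f x ≤
      inner' n (fun i => indVec n B S i - x i)
        (auxGrad n B f (fun z => Real.exp ((β * (1 - γ) + γ ^ 2) * (z - 1))) x) := by
  have hφ : 0 < β * (1 - γ) + γ ^ 2 := by
    have := mul_nonneg (zero_le_one.trans hβ) (sub_nonneg.2 hγ1)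
    positivity
  have key := le_integral_exp_mul_sub hφ.ne' (hasDerivAt_ME_smul f x)
    (continuous_inner'_grad_ME_smul f (indVec n B S) x) (continuous_inner'_grad_ME_smul f x x)
    fun z hz => sub_le_inner'_indVec_grad_ME hmono hγ0.le hγ1 hbelow habove hfempty hS
      (hx.smul hz.1 hz.2)
  rw [zero_smul, ME_zero, hfempty, one_smul] at key
  rw [inner'_auxGrad f (by fun_prop)]
  simp only [inner'_sub_left]
  exact (le_of_eq (by ring)).trans key

theorem multinoulliExtension_aux_weaklySub {K : ℕ} (n B : Fin K → ℕ) (hn : ∀ k, 1 ≤ n k)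
    (hB : ∀ k, 0 < B k) (hBn : ∀ k, B k ≤ n k)
    (f : Finset (Elem n) → ℝ) (hf0 : ∀ S, 0 ≤ f S)
    (hmono : MonotoneSet n f)
    (γ β : ℝ) (hγ0 : 0 < γ) (hγ1 : γ ≤ 1) (hβ : 1 ≤ β)
    (hbelow : WeaklyBelow n f γ) (habove : WeaklyAbove n f β)
    (hfempty : f ∅ = 0)
    (x : Elem n → ℝ) (hx : InSimplex n x)
    (S : Finset (Elem n)) (hS : Feasible n B S) :
    γ ^ 2 * (1 - Real.exp (-(β * (1 - γ) + γ ^ 2))) / (β * (1 - γ) + γ ^ 2) * f S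
        - ME n B f x ≤
      inner' n (fun i => indVec n B S i - x i)
        (auxGrad n B f (fun z => Real.exp ((β * (1 - γ) + γ ^ 2) * (z - 1))) x) :=
  multinoulliExtension_aux_weaklySub_general n B f hmono γ β hγ0 hγ1 hβ hbelow habove hfempty x hx S
    hS

end Multinoulli
end
end
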